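/- arXiv:nlin/0003020 — 4 statements merged into one kernel-verified Lean document; each statement's English description precedes it below -/
import Mathlib

section
/- The functions H_0, H_1, H_2 (as above) are integrals of motion for the vector field X_3 on R^5 given by du_0/dt = (1/4)(u_3 - 6u_0u_1), du_1/dt = (1/4)(u_4 - 6u_0u_2 - 6u_1^2), du_2/dt = (1/4)(4u_0u_3 + 2u_1u_2 - 30u_0^2u_1), du_3/dt = (1/4)(4u_0u_4 + 6u_1u_3 + 2u_2^2 - 30u_0^2u_2 - 60u_0u_1^2), du_4/dt = (1/4)(10u_1u_4 + 10u_0^2u_3 + 10u_2u_3 - 100u_0u_1u_2 - 60u_1^3 - 120u_0^3u_1). -/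
/-! The sum `∑ i, X₃ⁱ ∂ᵢH` is the differential `dH` evaluated at `X₃`. The differentials of the
polynomial Hamiltonians follow from the sum, product and power rules, and their vanishing on `X₃`
is then a polynomial identity. -/

noncomputable section

/-- Partial derivative of `H : ℝ⁵ → ℝ` at `u` in the `i`-th coordinate direction. -/
noncomputable def pd (H : (Fin 5 → ℝ) → ℝ) (u : Fin 5 → ℝ) (i : Fin 5) : ℝ :=
  fderiv ℝ H u (Pi.single i 1)

/-- The Hamiltonian `H₀` of the stationary KdV₅ system. -/
def H0 (u : Fin 5 → ℝ) : ℝ :=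
  (1/16) * (-2*u 2*u 4 + 6*(u 0)^2*u 4 + (u 3)^2 - 12*u 0*u 1*u 3
    + 16*u 0*(u 2)^2 + 12*(u 1)^2*u 2 - 60*(u 0)^3*u 2 + 36*(u 0)^5)

/-- The Hamiltonian `H₁` of the stationary KdV₅ system. -/
def H1 (u : Fin 5 → ℝ) : ℝ :=
  -(1/4) * (2*u 0*u 4 - 2*u 1*u 3 + (u 2)^2 - 20*(u 0)^2*u 2 + 15*(u 0)^4)

/-- The Hamiltonian `H₂` of the stationary KdV₅ system. -/
def H2 (u : Fin 5 → ℝ) : ℝ :=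
  u 4 - 10*u 0*u 2 - 5*(u 1)^2 + 10*(u 0)^3

/-- The first vector field `X₁` of the stationary KdV₅ system. -/
def X1 (u : Fin 5 → ℝ) : Fin 5 → ℝ :=
  ![u 1, u 2, u 3, u 4, 10*u 0*u 3 + 20*u 1*u 2 - 30*(u 0)^2*u 1]

/-- The third vector field `X₃` of the stationary KdV₅ system. -/
def X3 (u : Fin 5 → ℝ) : Fin 5 → ℝ :=
  ![(1/4)*(u 3 - 6*u 0*u 1),
    (1/4)*(u 4 - 6*u 0*u 2 - 6*(u 1)^2),
    (1/4)*(4*u 0*u 3 + 2*u 1*u 2 - 30*(u 0)^2*u 1),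
    (1/4)*(4*u 0*u 4 + 6*u 1*u 3 + 2*(u 2)^2 - 30*(u 0)^2*u 2 - 60*u 0*(u 1)^2),
    (1/4)*(10*u 1*u 4 + 10*(u 0)^2*u 3 + 10*u 2*u 3 - 100*u 0*u 1*u 2
      - 60*(u 1)^3 - 120*(u 0)^3*u 1)]

/-- The first Poisson tensor `P₀` of the stationary KdV₅ system. -/
def P0 (u : Fin 5 → ℝ) : Matrix (Fin 5) (Fin 5) ℝ :=
  !![0, 0, 0, 2, 0;
     0, 0, -2, 0, -20*u 0;
     0, 2, 0, 20*u 0, 20*u 1;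
     -2, 0, -20*u 0, 0, -140*(u 0)^2 - 20*u 2;
     0, 20*u 0, -20*u 1, 140*(u 0)^2 + 20*u 2, 0]

/-- The second Poisson tensor `P₁` of the stationary KdV₅ system. -/
def P1 (u : Fin 5 → ℝ) : Matrix (Fin 5) (Fin 5) ℝ :=
  !![0, 1/2, 0, 3*u 0, 6*u 1;
     -(1/2), 0, -3*u 0, -3*u 1, -4*u 2 - 15*(u 0)^2;
     0, 3*u 0, 0, u 2 + 15*(u 0)^2, u 3 + 30*u 0*u 1;
     -3*u 0, 3*u 1, -(u 2 + 15*(u 0)^2), 0, u 4 - 40*u 0*u 2 + 30*(u 1)^2 - 60*(u 0)^3;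
     -6*u 1, 4*u 2 + 15*(u 0)^2, -(u 3 + 30*u 0*u 1),
       -(u 4 - 40*u 0*u 2 + 30*(u 1)^2 - 60*(u 0)^3), 0]

/-- One term of the cyclic Jacobi expression: `∑ₗ P_{il} ∂Q_{jk}/∂u_l`. -/
noncomputable def jacTerm (P Q : (Fin 5 → ℝ) → Matrix (Fin 5) (Fin 5) ℝ)
    (u : Fin 5 → ℝ) (i j k : Fin 5) : ℝ :=
  ∑ l, P u i l * pd (fun v => Q v j k) u l

section Differentials

open ContinuousLinearMap

theorem fderiv_eval {ι : Type*} [Fintype ι] (i : ι) (u : ι → ℝ) :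
    fderiv ℝ (fun w : ι → ℝ => w i) u = proj i :=
  (hasFDerivAt_apply i u).fderiv

theorem sum_mul_pd_eq_fderiv (H : (Fin 5 → ℝ) → ℝ) (u v : Fin 5 → ℝ) :
    ∑ i, v i * pd H u i = fderiv ℝ H u v := by
  conv_rhs => rw [pi_eq_sum_univ' v, map_sum]
  simp only [pd, map_smul, smul_eq_mul]

theorem fderiv_H0_apply (u v : Fin 5 → ℝ) :
    fderiv ℝ H0 u v = (1/16) *
      ((12*u 0*u 4 - 12*u 1*u 3 + 16*(u 2)^2 - 180*(u 0)^2*u 2 + 180*(u 0)^4) * v 0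
        + (-12*u 0*u 3 + 24*u 1*u 2) * v 1
        + (-2*u 4 + 32*u 0*u 2 + 12*(u 1)^2 - 60*(u 0)^3) * v 2
        + (2*u 3 - 12*u 0*u 1) * v 3
        + (-2*u 2 + 6*(u 0)^2) * v 4) := by
  change fderiv ℝ (fun w => H0 w) u v = _
  simp (disch := fun_prop) only [H0, fderiv_fun_sub, fderiv_fun_add, fderiv_fun_mul,
    fderiv_fun_pow, fderiv_fun_const, fderiv_eval, sub_apply, add_apply,
    smul_apply, proj_apply, Pi.zero_apply, zero_apply, smul_eq_mul, nsmul_eq_mul]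
  ring

theorem fderiv_H1_apply (u v : Fin 5 → ℝ) :
    fderiv ℝ H1 u v = -(1/4) *
      ((2*u 4 - 40*u 0*u 2 + 60*(u 0)^3) * v 0 - 2*u 3 * v 1
        + (2*u 2 - 20*(u 0)^2) * v 2 - 2*u 1 * v 3 + 2*u 0 * v 4) := by
  change fderiv ℝ (fun w => H1 w) u v = _
  simp (disch := fun_prop) only [H1, fderiv_fun_sub, fderiv_fun_add, fderiv_fun_mul,
    fderiv_fun_pow, fderiv_fun_const, fderiv_eval, sub_apply, add_apply,
    smul_apply, proj_apply, Pi.zero_apply, zero_apply, smul_eq_mul, nsmul_eq_mul]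
  ring

theorem fderiv_H2_apply (u v : Fin 5 → ℝ) :
    fderiv ℝ H2 u v =
      (30*(u 0)^2 - 10*u 2) * v 0 - 10*u 1 * v 1 - 10*u 0 * v 2 + v 4 := by
  change fderiv ℝ (fun w => H2 w) u v = _
  simp (disch := fun_prop) only [H2, fderiv_fun_sub, fderiv_fun_add, fderiv_fun_mul,
    fderiv_fun_pow, fderiv_fun_const, fderiv_eval, sub_apply, add_apply,
    smul_apply, proj_apply, Pi.zero_apply, zero_apply, smul_eq_mul, nsmul_eq_mul]
  ring

end Differentials

/-- `H₀, H₁, H₂` are integrals of motion of the vector field `X₃` of KdV₅. -/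
theorem stmt1 :
    (∀ u : Fin 5 → ℝ, ∑ i, X3 u i * pd H0 u i = 0) ∧
    (∀ u : Fin 5 → ℝ, ∑ i, X3 u i * pd H1 u i = 0) ∧
    (∀ u : Fin 5 → ℝ, ∑ i, X3 u i * pd H2 u i = 0) := by
  simp only [sum_mul_pd_eq_fderiv, fderiv_H0_apply, fderiv_H1_apply, fderiv_H2_apply]
  refine ⟨fun u => ?_, fun u => ?_, fun u => ?_⟩ <;>
    simp only [X3, Matrix.cons_val_zero, Matrix.cons_val_one, Matrix.cons_val] <;> ring

end
end

section
/- The 5x5 antisymmetric matrix P_0 with entries (P_0)_{14} = 2, (P_0)_{23} = -2, (P_0)_{25} = -20u_0, (P_0)_{34} = 20u_0, (P_0)_{35} = 20u_1, (P_0)_{45} = -140u_0^2 - 20u_2 (and entries determined by antisymmetry, all others zero) defines a Poisson tensor on R^5: it satisfies the Jacobi identity sum over cyclic permutations of (i,j,k) of sum_l (P_0)_{il} ∂(P_0)_{jk}/∂u_l = 0 for all indices i,j,k. -/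
/-! The Jacobiator of a skew-symmetric bivector is invariant under cyclic permutations of
`(i, j, k)` and changes sign under a transposition, so it is totally antisymmetric. It
therefore suffices to check that it vanishes on the ten strictly increasing triples, where
the entries of `P₀` are explicit polynomials in `u₀, u₁, u₂` and the check is a direct
computation. -/

noncomputable section

open scoped Matrix

section PartialDerivative

variable {f g : (Fin 5 → ℝ) → ℝ} {u : Fin 5 → ℝ} {i : Fin 5}

@[simp]
lemma pd_const (c : ℝ) : pd (fun _ => c) u i = 0 := by
  simp [pd]

@[simp]
lemma pd_coord (m : Fin 5) : pd (fun v => v m) u i = if m = i then 1 else 0 := by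
  simp [pd, (hasFDerivAt_apply m u).fderiv, Pi.single_apply]

@[simp]
lemma pd_neg (f : (Fin 5 → ℝ) → ℝ) : pd (fun v => -f v) u i = -pd f u i := by
  simp [pd]

lemma pd_sub (hf : DifferentiableAt ℝ f u) (hg : DifferentiableAt ℝ g u) :
    pd (fun v => f v - g v) u i = pd f u i - pd g u i := by
  simp [pd, fderiv_fun_sub hf hg]

lemma pd_const_mul (c : ℝ) (hf : DifferentiableAt ℝ f u) :
    pd (fun v => c * f v) u i = c * pd f u i := by
  simp [pd, fderiv_const_mul hf]

lemma pd_pow (n : ℕ) (hf : DifferentiableAt ℝ f u) :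
    pd (fun v => f v ^ n) u i = n * f u ^ (n - 1) * pd f u i := by
  simp [pd, fderiv_fun_pow n hf]

end PartialDerivative

def jacobiator (P : (Fin 5 → ℝ) → Matrix (Fin 5) (Fin 5) ℝ) (u : Fin 5 → ℝ) (i j k : Fin 5) :
    ℝ :=
  jacTerm P P u i j k + jacTerm P P u j k i + jacTerm P P u k i j

section Jacobiator

variable {P Q : (Fin 5 → ℝ) → Matrix (Fin 5) (Fin 5) ℝ} {u : Fin 5 → ℝ} {i j k : Fin 5}

lemma jacTerm_swap (hQ : ∀ v, (Q v)ᵀ = -Q v) : jacTerm P Q u i k j = -jacTerm P Q u i j k := by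
  have hQ' : ∀ v, Q v k j = -Q v j k := fun v => by
    simpa using congrFun (congrFun (hQ v) j) k
  simp only [jacTerm, hQ', pd_neg, mul_neg, Finset.sum_neg_distrib]

lemma jacobiator_rotate : jacobiator P u i j k = jacobiator P u j k i := by
  unfold jacobiator; ring

lemma jacobiator_swap (hP : ∀ v, (P v)ᵀ = -P v) :
    jacobiator P u i k j = -jacobiator P u i j k := by
  simp only [jacobiator, jacTerm_swap hP (i := i) (j := j), jacTerm_swap hP (i := k) (j := i),
    jacTerm_swap hP (i := j) (j := k)]
  ring

end Jacobiator

lemma eq_zero_of_rotate_of_swap {α : Type*} [LinearOrder α] {J : α → α → α → ℝ}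
    (hrot : ∀ i j k, J i j k = J j k i) (hswap : ∀ i j k, J i k j = -J i j k)
    (hsorted : ∀ i j k, i < j → j < k → J i j k = 0) (i j k : α) : J i j k = 0 := by
  rcases lt_trichotomy i j with hij | hij | hij <;>
    rcases lt_trichotomy j k with hjk | hjk | hjk <;>
    rcases lt_trichotomy i k with hik | hik | hik <;> grind

lemma P0_transpose (u : Fin 5 → ℝ) : (P0 u)ᵀ = -P0 u := by
  ext i j
  fin_cases i <;> fin_cases j <;> simp [P0] <;> ring

lemma jacobiator_P0_of_lt (u : Fin 5 → ℝ) {i j k : Fin 5} (hij : i < j) (hjk : j < k) :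
    jacobiator P0 u i j k = 0 := by
  fin_cases i <;> fin_cases j <;> fin_cases k <;> simp [Fin.lt_def] at hij hjk <;>
    simp (disch := fun_prop) [jacobiator, jacTerm, Fin.sum_univ_five, P0, pd_sub,
      pd_const_mul, pd_pow]

/-- `P₀` satisfies the cyclic Jacobi identity, hence is a Poisson tensor on ℝ⁵. -/
theorem stmt3 :
    ∀ u : Fin 5 → ℝ, ∀ i j k : Fin 5,
      jacTerm P0 P0 u i j k + jacTerm P0 P0 u j k i + jacTerm P0 P0 u k i j = 0 :=
  fun u => eq_zero_of_rotate_of_swap (fun _ _ _ => jacobiator_rotate)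
    (fun _ _ _ => jacobiator_swap P0_transpose) (fun _ _ _ => jacobiator_P0_of_lt u)

end
end

section
/- The vector field X_3 of the stationary KdV_5 system is bi-Hamiltonian: X_3 = P_0 · dH_0 = P_1 · dH_1 identically on R^5. -/
noncomputable section

namespace MvPolynomial

@[simp]
theorem pderiv_ofNat {R σ : Type*} [CommSemiring R] (i : σ) (n : ℕ) [n.AtLeastTwo] :
    pderiv i (ofNat(n) : MvPolynomial σ R) = 0 := by
  rw [← map_ofNat C n, pderiv_C]

variable {𝕜 σ : Type*} [NontriviallyNormedField 𝕜] [Fintype σ]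

theorem hasFDerivAt_eval (p : MvPolynomial σ 𝕜) (u : σ → 𝕜) :
    HasFDerivAt (fun x => eval x p)
      (∑ i, eval u (pderiv i p) • ContinuousLinearMap.proj i : (σ → 𝕜) →L[𝕜] 𝕜) u := by
  classical
  induction p using MvPolynomial.induction_on with
  | C a =>
    simp only [eval_C]
    refine (hasFDerivAt_const (𝕜 := 𝕜) a u).congr_fderiv ?_
    ext v
    simp
  | add p q hp hq =>
    simp only [map_add]
    refine (hp.add hq).congr_fderiv ?_
    ext v
    simp [add_mul, Finset.sum_add_distrib]
  | mul_X p n hp =>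
    simp only [map_mul, eval_X]
    refine (hp.mul (hasFDerivAt_apply n u)).congr_fderiv ?_
    ext v
    simp [pderiv_X, Pi.single_apply, add_mul, Finset.sum_add_distrib, Finset.mul_sum, apply_ite,
      mul_assoc]

theorem fderiv_eval_single [DecidableEq σ] (p : MvPolynomial σ 𝕜) (u : σ → 𝕜) (i : σ) :
    fderiv 𝕜 (fun x => eval x p) u (Pi.single i 1) = eval u (pderiv i p) := by
  simp [(hasFDerivAt_eval p u).fderiv, Pi.single_apply]

end MvPolynomial

open MvPolynomial
open scoped Matrix

theorem pd_eval (p : MvPolynomial (Fin 5) ℝ) (u : Fin 5 → ℝ) (i : Fin 5) :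
    pd (fun x => eval x p) u i = eval u (pderiv i p) :=
  fderiv_eval_single p u i

def H0poly : MvPolynomial (Fin 5) ℝ :=
  C (1/16) * (-2*X 2*X 4 + 6*X 0^2*X 4 + X 3^2 - 12*X 0*X 1*X 3
    + 16*X 0*X 2^2 + 12*X 1^2*X 2 - 60*X 0^3*X 2 + 36*X 0^5)

def H1poly : MvPolynomial (Fin 5) ℝ :=
  C (-(1/4)) * (2*X 0*X 4 - 2*X 1*X 3 + X 2^2 - 20*X 0^2*X 2 + 15*X 0^4)

theorem H0_eq_eval : H0 = fun u => eval u H0poly := by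
  funext u
  simp [H0, H0poly]

theorem H1_eq_eval : H1 = fun u => eval u H1poly := by
  funext u
  simp [H1, H1poly]

theorem pd_H0 (u : Fin 5 → ℝ) :
    pd H0 u =
      ![(1/16)*(12*u 0*u 4 - 12*u 1*u 3 + 16*(u 2)^2 - 180*(u 0)^2*u 2 + 180*(u 0)^4),
        (1/16)*(-12*u 0*u 3 + 24*u 1*u 2),
        (1/16)*(-2*u 4 + 32*u 0*u 2 + 12*(u 1)^2 - 60*(u 0)^3),
        (1/16)*(2*u 3 - 12*u 0*u 1),
        (1/16)*(-2*u 2 + 6*(u 0)^2)] := by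
  funext i
  rw [H0_eq_eval, pd_eval]
  fin_cases i <;> simp [H0poly, pderiv_X] <;> ring

theorem pd_H1 (u : Fin 5 → ℝ) :
    pd H1 u =
      ![-(1/4)*(2*u 4 - 40*u 0*u 2 + 60*(u 0)^3),
        (1/2)*u 3,
        -(1/4)*(2*u 2 - 20*(u 0)^2),
        (1/2)*u 1,
        -(1/2)*u 0] := by
  funext i
  rw [H1_eq_eval, pd_eval]
  fin_cases i <;> simp [H1poly, pderiv_X] <;> ring

theorem X3_eq_P0_mulVec_pd_H0 (u : Fin 5 → ℝ) : X3 u = P0 u *ᵥ pd H0 u := by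
  funext i
  rw [pd_H0]
  fin_cases i <;> simp [X3, P0, Matrix.mulVec, dotProduct, Fin.sum_univ_five] <;> ring

theorem X3_eq_P1_mulVec_pd_H1 (u : Fin 5 → ℝ) : X3 u = P1 u *ᵥ pd H1 u := by
  funext i
  rw [pd_H1]
  fin_cases i <;> simp [X3, P1, Matrix.mulVec, dotProduct, Fin.sum_univ_five] <;> ring

/-- `X₃` is bi-Hamiltonian: `X₃ = P₀ · dH₀ = P₁ · dH₁`. -/
theorem stmt9 :
    ∀ u : Fin 5 → ℝ, ∀ i : Fin 5,
      X3 u i = ∑ j, P0 u i j * pd H0 u j ∧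
      X3 u i = ∑ j, P1 u i j * pd H1 u j :=
  fun u i => ⟨congrFun (X3_eq_P0_mulVec_pd_H0 u) i, congrFun (X3_eq_P1_mulVec_pd_H1 u) i⟩

end
end

section
/- On the space M_A of sl(2)-valued matrix polynomials X(λ) = λ^{g+1}A + sum_{i=0}^g λ^iX_i, with A = [[0,0],[1,0]], the function H(λ) = (1/2)Tr X(λ)^2 is a Casimir of the Poisson pencil P_λ = P_1 - λP_0: writing H(λ) = sum_{i=0}^{2g+1} H_iλ^i, one has P_λ dH(λ) = 0, using that dH(λ) = (X(λ), λX(λ), ..., λ^gX(λ)) under the trace pairing. -/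
/-!
Write `Y = X(λ) = ∑ₖ λᵏ Xₖ` (with `X_{g+1} = A`) and `Cₖ = [Xₖ, Y]`, so that
`∑ₖ λᵏ Cₖ = [Y, Y] = 0`. Evaluated on the covector `(λʲ Y)ⱼ`, the first component of
`P₁ - λP₀` is `-∑ₖ λᵏ Cₖ`, and the `i`-th one (`i ≥ 1`) telescopes to the single term
`-λ^{g+1} C_{i+g+1}`, which vanishes because `X(λ)` has degree `g + 1`.
-/

noncomputable section

attribute [local instance] Matrix.normedAddCommGroup Matrix.normedSpace

/-- The coefficients of the matrix polynomial `X(λ) = λ^{n+1}A + ∑_{i=0}^n λ^i Xᵢ`,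
extended by `X_{n+1} := A` and `X_k := 0` for `k > n+1`. -/
def Xext {m : ℕ} (n : ℕ) (A : Matrix (Fin m) (Fin m) ℝ)
    (X : Fin (n+1) → Matrix (Fin m) (Fin m) ℝ) (k : ℕ) : Matrix (Fin m) (Fin m) ℝ :=
  if h : k ≤ n then X ⟨k, by omega⟩ else if k = n + 1 then A else 0

/-- The matrix polynomial `X(λ) = λ^{n+1}A + ∑_{i=0}^n λ^i Xᵢ`. -/
def Xpoly {m : ℕ} (n : ℕ) (A : Matrix (Fin m) (Fin m) ℝ)
    (X : Fin (n+1) → Matrix (Fin m) (Fin m) ℝ) (lam : ℝ) : Matrix (Fin m) (Fin m) ℝ :=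
  ∑ k ∈ Finset.range (n+2), lam^k • Xext n A X k

/-- The first Poisson tensor `P₀` on `M_A`: the Hankel-type block matrix of
commutator maps `[X_{i+j+1}, ·]` (with `X_{n+1} = A` and higher coefficients zero),
applied to a covector `W`. -/
def P0map {m : ℕ} (n : ℕ) (A : Matrix (Fin m) (Fin m) ℝ)
    (X W : Fin (n+1) → Matrix (Fin m) (Fin m) ℝ) : Fin (n+1) → Matrix (Fin m) (Fin m) ℝ :=
  fun i => ∑ j : Fin (n+1),
    (Xext n A X ((i:ℕ)+(j:ℕ)+1) * W j - W j * Xext n A X ((i:ℕ)+(j:ℕ)+1))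

/-- The second Poisson tensor `P₁` on `M_A`: the `(0,0)` block is `-[X₀, ·]`, the rest of
the first row and column vanish, and the inner block is the shifted Hankel matrix of
commutator maps `[X_{i+j}, ·]`, applied to a covector `W`. -/
def P1map {m : ℕ} (n : ℕ) (A : Matrix (Fin m) (Fin m) ℝ)
    (X W : Fin (n+1) → Matrix (Fin m) (Fin m) ℝ) : Fin (n+1) → Matrix (Fin m) (Fin m) ℝ :=
  fun i =>
    if (i:ℕ) = 0 then -(X 0 * W 0 - W 0 * X 0)
    else ∑ j : Fin (n+1),
      if (j:ℕ) = 0 then 0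
      else Xext n A X ((i:ℕ)+(j:ℕ)) * W j - W j * Xext n A X ((i:ℕ)+(j:ℕ))

open Finset

attribute [local instance] LieRing.ofAssociativeRing LieAlgebra.ofAssociativeAlgebra

section MatrixPencil

variable {m n : ℕ} (A : Matrix (Fin m) (Fin m) ℝ) (X : Fin (n+1) → Matrix (Fin m) (Fin m) ℝ)

theorem Xext_eq_zero_of_lt {k : ℕ} (hk : n + 1 < k) : Xext n A X k = 0 := by
  rw [Xext, dif_neg (by omega), if_neg (by omega)]

theorem Xext_coe (k : Fin (n+1)) : Xext n A X k = X k := by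
  simp [Xext, k.is_le]

theorem sum_pow_smul_lie_Xext_Xpoly (lam : ℝ) :
    ∑ k ∈ range (n+2), lam ^ k • ⁅Xext n A X k, Xpoly n A X lam⁆ = 0 := by
  simp only [← smul_lie]
  rw [← sum_lie]
  exact lie_self _

theorem mul_smul_sub_smul_mul_eq_smul_lie (M Y : Matrix (Fin m) (Fin m) ℝ) (c : ℝ) :
    M * (c • Y) - (c • Y) * M = c • ⁅M, Y⁆ := by
  rw [← Ring.lie_def, lie_smul]

theorem smul_P0map_pow_smul (Y : Matrix (Fin m) (Fin m) ℝ) (lam : ℝ) (i : Fin (n+1)) :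
    lam • P0map n A X (fun j => lam ^ (j:ℕ) • Y) i
      = ∑ k ∈ range (n+1), lam ^ (k+1) • ⁅Xext n A X (i + k + 1), Y⁆ := by
  simp only [P0map, mul_smul_sub_smul_mul_eq_smul_lie, smul_sum, smul_smul, ← pow_succ']
  exact Fin.sum_univ_eq_sum_range (fun k => lam ^ (k+1) • ⁅Xext n A X (i + k + 1), Y⁆) _

theorem P1map_pow_smul_of_eq_zero (Y : Matrix (Fin m) (Fin m) ℝ) (lam : ℝ) {i : Fin (n+1)}
    (hi : (i:ℕ) = 0) :
    P1map n A X (fun j => lam ^ (j:ℕ) • Y) i = -⁅Xext n A X 0, Y⁆ := by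
  simp [P1map, hi, ← Ring.lie_def, ← Xext_coe A X 0]

theorem P1map_pow_smul_of_ne_zero (Y : Matrix (Fin m) (Fin m) ℝ) (lam : ℝ) {i : Fin (n+1)}
    (hi : (i:ℕ) ≠ 0) :
    P1map n A X (fun j => lam ^ (j:ℕ) • Y) i
      = ∑ k ∈ range n, lam ^ (k+1) • ⁅Xext n A X (i + k + 1), Y⁆ := by
  simp only [P1map, hi, if_false, mul_smul_sub_smul_mul_eq_smul_lie, Fin.sum_univ_succ,
    Fin.val_zero, if_true, Fin.val_succ, Nat.succ_ne_zero, zero_add, ← add_assoc]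
  exact Fin.sum_univ_eq_sum_range (fun k => lam ^ (k+1) • ⁅Xext n A X (i + k + 1), Y⁆) _

end MatrixPencil

theorem stmt15_general (g : ℕ) (X : Fin (g+1) → Matrix (Fin 2) (Fin 2) ℝ)
    (lam : ℝ) :
    let A : Matrix (Fin 2) (Fin 2) ℝ := !![0, 0; 1, 0]
    let W : Fin (g+1) → Matrix (Fin 2) (Fin 2) ℝ := fun j => lam^(j:ℕ) • Xpoly g A X lam
    ∀ i, P1map g A X W i - lam • P0map g A X W i = 0 := by
  intro A W i
  have hcasimir := sum_pow_smul_lie_Xext_Xpoly A X lam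
  rw [smul_P0map_pow_smul]
  by_cases hi : (i:ℕ) = 0
  · rw [sum_range_succ', pow_zero, one_smul] at hcasimir
    rw [P1map_pow_smul_of_eq_zero A X _ _ hi, hi]
    simp only [zero_add]
    linear_combination (norm := abel) -hcasimir
  · rw [P1map_pow_smul_of_ne_zero A X _ _ hi, sum_range_succ,
      Xext_eq_zero_of_lt A X (by omega : g + 1 < i + g + 1), zero_lie, smul_zero, add_zero,
      sub_self]

/-- On `M_A` with `g = sl(2)` and `A = [[0,0],[1,0]]`, the function
`H(λ) = (1/2)Tr X(λ)²` is a Casimir of the Poisson pencil `P_λ = P₁ - λP₀`: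
since `dH(λ) = (X(λ), λX(λ), …, λ^g X(λ))` under the trace pairing,
one has `P_λ dH(λ) = 0`. -/
theorem stmt15 (g : ℕ) (X : Fin (g+1) → Matrix (Fin 2) (Fin 2) ℝ)
    (hX : ∀ i, (X i).trace = 0) (lam : ℝ) :
    let A : Matrix (Fin 2) (Fin 2) ℝ := !![0, 0; 1, 0]
    let W : Fin (g+1) → Matrix (Fin 2) (Fin 2) ℝ := fun j => lam^(j:ℕ) • Xpoly g A X lam
    ∀ i, P1map g A X W i - lam • P0map g A X W i = 0 :=
  stmt15_general g X lam
end
end
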